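/- Let F₁, F₂ : ℝ^{m+1} → ℂ be homogeneous polynomials of degree d with ΔF₁ = ΔF₂ = 0 and (∇ₓF₁)ᵀ∇ₓF₂ = 0 for all x. Then the restrictions f_i = F_i|_{S^m} satisfy Δ_{S^m}f_i = −d(d+m−1) f_i and g_ℂ(∇^{S^m}f₁, ∇^{S^m}f₂) = −d² f₁ f₂. -/

import Mathlib

open MvPolynomial

/-- Evaluation of a complex polynomial at a real point. -/
noncomputable def pev {n : ℕ} (F : MvPolynomial (Fin n) ℂ) (x : Fin n → ℝ) : ℂ :=
  eval (fun j => (x j : ℂ)) F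

/-- The (complexified) Euclidean gradient of a polynomial at a real point. -/
noncomputable def pgrad {n : ℕ} (F : MvPolynomial (Fin n) ℂ) (x : Fin n → ℝ) : Fin n → ℂ :=
  fun i => pev (pderiv i F) x

/-- Spherical gradient of `F|_{S}` at a unit point: tangential projection of the gradient. -/
noncomputable def ptang {n : ℕ} (F : MvPolynomial (Fin n) ℂ) (x : Fin n → ℝ) : Fin n → ℂ :=
  fun i => pgrad F x i - (∑ j, (x j : ℂ) * pgrad F x j) * (x i : ℂ)

/-- The Euclidean Laplacian of a function `ℝ^n → ℂ`. -/
noncomputable def lap {n : ℕ} (F : (Fin n → ℝ) → ℂ) (x : Fin n → ℝ) : ℂ :=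
  ∑ i, fderiv ℝ (fun y => fderiv ℝ F y (Pi.single i 1)) x (Pi.single i 1)

/-- The degree-zero homogeneous extension of `F|_{S}` to `ℝ^n \ {0}`; the Laplace–Beltrami
operator on the unit sphere is given by `Δ_{S} (F|_S) (p) = Δ (ext F) (p)` for `‖p‖ = 1`. -/
noncomputable def ext {n : ℕ} (F : MvPolynomial (Fin n) ℂ) : (Fin n → ℝ) → ℂ :=
  fun x => pev F (fun j => (Real.sqrt (∑ l, x l ^ 2))⁻¹ * x j)

/-! On the unit sphere the Laplace–Beltrami operator is the Euclidean Laplacian of the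
degree-zero extension `|x|^{-d} F(x)`. Differentiating `|x|^{2a} G(x)` twice and evaluating at a
unit vector gives `ΔG + 4a (x·∇G) + 2a (n + 2a - 2) G`; for `a = -d/2`, harmonicity and Euler's
identity `x·∇F = d F` leave `-d (d + n - 2) F`. On the sphere the tangential gradients satisfy
`∇ᵀf₁·∇ᵀf₂ = ∇F₁·∇F₂ - (x·∇F₁)(x·∇F₂)`, and Euler's identity turns the last product into
`d² F₁ F₂`. -/

variable {n : ℕ}

lemma MvPolynomial.IsHomogeneous.pev_smul {d : ℕ} {F : MvPolynomial (Fin n) ℂ}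
    (hF : F.IsHomogeneous d) (c : ℝ) (x : Fin n → ℝ) : pev F (c • x) = c ^ d • pev F x := by
  simp only [pev, eval_eq', Finset.smul_sum, Pi.smul_apply, smul_eq_mul, Complex.ofReal_mul,
    mul_pow, Finset.prod_mul_distrib, Finset.prod_pow_eq_pow_sum, Complex.real_smul]
  refine Finset.sum_congr rfl fun v hv => ?_
  have hdeg : ∑ i, v i = d := by
    simpa [Finsupp.weight_eq_sum] using hF (mem_support_iff.mp hv)
  rw [hdeg]
  push_cast
  ring

lemma MvPolynomial.IsHomogeneous.sum_mul_pgrad {d : ℕ} {F : MvPolynomial (Fin n) ℂ}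
    (hF : F.IsHomogeneous d) (x : Fin n → ℝ) : ∑ j, (x j : ℂ) * pgrad F x j = d * pev F x := by
  simpa [pev, pgrad, map_sum] using congrArg (pev · x) hF.sum_X_mul_pderiv

lemma hasFDerivAt_pev (F : MvPolynomial (Fin n) ℂ) (x : Fin n → ℝ) :
    HasFDerivAt (pev F)
      (∑ i, (ContinuousLinearMap.proj i : (Fin n → ℝ) →L[ℝ] ℝ).smulRight (pev (pderiv i F) x))
      x := by
  induction F using MvPolynomial.induction_on with
  | C a =>
    have hC : pev (C a : MvPolynomial (Fin n) ℂ) = fun _ => a := by ext; simp [pev]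
    simpa [hC, pev] using hasFDerivAt_const (𝕜 := ℝ) a x
  | add p q hp hq =>
    have hpq : pev (p + q) = fun y => pev p y + pev q y := by ext; simp [pev]
    rw [hpq]
    refine (hp.add hq).congr_fderiv ?_
    ext v
    simp [pev, Finset.sum_add_distrib, smul_add]
  | mul_X p i hp =>
    have hpX : pev (p * X i) = fun y => y i • pev p y := by ext; simp [pev, mul_comm]
    rw [hpX]
    refine ((hasFDerivAt_apply i x).smul hp).congr_fderiv ?_
    ext v
    simp [pev, Finset.sum_add_distrib, Pi.single_apply, Finset.smul_sum, apply_ite,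
      mul_left_comm, add_comm]

noncomputable def radialPev (a : ℝ) (G : MvPolynomial (Fin n) ℂ) (x : Fin n → ℝ) : ℂ :=
  (∑ l, x l ^ 2) ^ a • pev G x

lemma ext_eq_radialPev {d : ℕ} {F : MvPolynomial (Fin n) ℂ} (hF : F.IsHomogeneous d) :
    _root_.ext F = radialPev (-(d / 2)) F := by
  funext x
  have hx : 0 ≤ ∑ l, x l ^ 2 := by positivity
  change pev F ((Real.sqrt (∑ l, x l ^ 2))⁻¹ • x) = _
  rw [hF.pev_smul, radialPev, Real.sqrt_eq_rpow, ← Real.rpow_neg hx, ← Real.rpow_natCast,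
    ← Real.rpow_mul hx]
  ring_nf

lemma radialPev_of_sum_sq_eq_one (a : ℝ) (G : MvPolynomial (Fin n) ℂ) {p : Fin n → ℝ}
    (hp : ∑ l, p l ^ 2 = 1) : radialPev a G p = pev G p := by
  simp [radialPev, hp]

lemma hasFDerivAt_sum_sq (y : Fin n → ℝ) :
    HasFDerivAt (fun x : Fin n → ℝ => ∑ l, x l ^ 2)
      (∑ l, (2 * y l) • (ContinuousLinearMap.proj l : (Fin n → ℝ) →L[ℝ] ℝ)) y := by
  refine HasFDerivAt.fun_sum fun l _ => ?_
  simpa using ((ContinuousLinearMap.proj l : (Fin n → ℝ) →L[ℝ] ℝ).hasFDerivAt (x := y)).pow 2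

lemma hasFDerivAt_radialPev (a : ℝ) (G : MvPolynomial (Fin n) ℂ) {y : Fin n → ℝ}
    (hy : 0 < ∑ l, y l ^ 2) :
    HasFDerivAt (radialPev a G)
      (∑ i, (ContinuousLinearMap.proj i : (Fin n → ℝ) →L[ℝ] ℝ).smulRight
        (radialPev a (pderiv i G) y + (2 * a) • radialPev (a - 1) (X i * G) y)) y := by
  refine (((hasFDerivAt_sum_sq y).rpow_const (.inl hy.ne')).smul
    (hasFDerivAt_pev G y)).congr_fderiv ?_
  ext v
  simp only [radialPev, pev, add_apply, sum_apply, smul_apply, ContinuousLinearMap.smulRight_apply,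
    ContinuousLinearMap.proj_apply, map_mul, eval_X, Complex.real_smul, smul_eq_mul,
    Complex.ofReal_sum, Complex.ofReal_mul, Complex.ofReal_ofNat, Finset.mul_sum, Finset.sum_mul,
    mul_add, Finset.sum_add_distrib]
  congr 1 <;> refine Finset.sum_congr rfl fun i _ => by ring

lemma fderiv_radialPev_single (a : ℝ) (G : MvPolynomial (Fin n) ℂ) {y : Fin n → ℝ}
    (hy : 0 < ∑ l, y l ^ 2) (i : Fin n) :
    fderiv ℝ (radialPev a G) y (Pi.single i 1) =
      radialPev a (pderiv i G) y + (2 * a) • radialPev (a - 1) (X i * G) y := by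
  simp [(hasFDerivAt_radialPev a G hy).fderiv, Pi.single_apply, Finset.sum_add_distrib]

open Filter Topology in
lemma fderiv_fderiv_radialPev_single (a : ℝ) (G : MvPolynomial (Fin n) ℂ) {p : Fin n → ℝ}
    (hp : ∑ l, p l ^ 2 = 1) (i : Fin n) :
    fderiv ℝ (fun y => fderiv ℝ (radialPev a G) y (Pi.single i 1)) p (Pi.single i 1) =
      pev (pderiv i (pderiv i G)) p + 4 * a * (p i * pev (pderiv i G) p) + 2 * a * pev G p +
        4 * a * (a - 1) * pev G p * p i ^ 2 := by
  have hp₀ : 0 < ∑ l, p l ^ 2 := by rw [hp]; exact one_pos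
  have hnear : ∀ᶠ y in 𝓝 p, 0 < ∑ l, y l ^ 2 :=
    (isOpen_lt continuous_const (by fun_prop)).mem_nhds hp₀
  have hfirst : (fun y => fderiv ℝ (radialPev a G) y (Pi.single i 1)) =ᶠ[𝓝 p]
      fun y => radialPev a (pderiv i G) y + (2 * a) • radialPev (a - 1) (X i * G) y :=
    hnear.mono fun y hy => fderiv_radialPev_single a G hy i
  have hd₁ := (hasFDerivAt_radialPev a (pderiv i G) hp₀).differentiableAt
  have hd₂ := (hasFDerivAt_radialPev (a - 1) (X i * G) hp₀).differentiableAt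
  rw [hfirst.fderiv_eq, fderiv_fun_add hd₁ (hd₂.fun_const_smul _), fderiv_fun_const_smul hd₂,
    add_apply, smul_apply, fderiv_radialPev_single _ _ hp₀, fderiv_radialPev_single _ _ hp₀]
  simp only [radialPev_of_sum_sq_eq_one _ _ hp, pev, Derivation.leibniz, pderiv_X_self, map_add,
    map_mul, map_one, eval_X, smul_eq_mul, Complex.real_smul]
  push_cast
  ring

lemma lap_radialPev (a : ℝ) (G : MvPolynomial (Fin n) ℂ) {p : Fin n → ℝ}
    (hp : ∑ l, p l ^ 2 = 1) :
    lap (radialPev a G) p = pev (∑ i, pderiv i (pderiv i G)) p +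
      4 * a * pev (∑ i, X i * pderiv i G) p + 2 * a * (n + 2 * (a - 1)) * pev G p := by
  have hpC : ∑ l, (p l : ℂ) ^ 2 = 1 := by exact_mod_cast hp
  simp only [lap, fderiv_fderiv_radialPev_single a G hp, Finset.sum_add_distrib, ← Finset.mul_sum,
    Finset.sum_const, Finset.card_univ, Fintype.card_fin, hpC, nsmul_eq_mul]
  simp only [pev, map_sum, map_mul, eval_X]
  ring

lemma lap_ext_of_isHomogeneous {d : ℕ} {F : MvPolynomial (Fin n) ℂ} (hF : F.IsHomogeneous d)
    (hharm : ∑ i, pderiv i (pderiv i F) = 0) {p : Fin n → ℝ} (hp : ∑ l, p l ^ 2 = 1) :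
    lap (_root_.ext F) p = -(d * (d + n - 2)) * pev F p := by
  rw [ext_eq_radialPev hF, lap_radialPev _ _ hp, hharm, hF.sum_X_mul_pderiv]
  simp only [pev, map_zero, nsmul_eq_mul, map_mul, map_natCast]
  push_cast
  ring

lemma sum_ptang_mul_ptang (F₁ F₂ : MvPolynomial (Fin n) ℂ) {p : Fin n → ℝ}
    (hp : ∑ l, p l ^ 2 = 1) :
    ∑ i, ptang F₁ p i * ptang F₂ p i = ∑ i, pgrad F₁ p i * pgrad F₂ p i -
      (∑ j, p j * pgrad F₁ p j) * ∑ j, p j * pgrad F₂ p j := by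
  have hpC : ∑ l, (p l : ℂ) ^ 2 = 1 := by exact_mod_cast hp
  set e₁ := ∑ j, (p j : ℂ) * pgrad F₁ p j
  set e₂ := ∑ j, (p j : ℂ) * pgrad F₂ p j
  have hterm : ∀ i, ptang F₁ p i * ptang F₂ p i = pgrad F₁ p i * pgrad F₂ p i -
      e₁ * (p i * pgrad F₂ p i) - e₂ * (p i * pgrad F₁ p i) + e₁ * e₂ * p i ^ 2 := fun i => by
    simp only [ptang]
    ring
  simp only [hterm, Finset.sum_add_distrib, Finset.sum_sub_distrib, ← Finset.mul_sum, hpC]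
  ring

/-- If `F₁, F₂` are harmonic homogeneous polynomials of degree `d` on `ℝ^{m+1}` with
`(∇ₓF₁)ᵀ∇ₓF₂ = 0` everywhere, then the restrictions `fᵢ = Fᵢ|_{S^m}` satisfy
`Δ_{S^m} fᵢ = -d(d+m-1) fᵢ` and `g_ℂ(∇^{S^m}f₁, ∇^{S^m}f₂) = -d² f₁f₂`. -/
theorem stmt9 {m : ℕ} (d : ℕ) (F₁ F₂ : MvPolynomial (Fin (m + 1)) ℂ)
    (hhom₁ : F₁.IsHomogeneous d) (hhom₂ : F₂.IsHomogeneous d)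
    (hharm₁ : ∑ i : Fin (m + 1), pderiv i (pderiv i F₁) = 0)
    (hharm₂ : ∑ i : Fin (m + 1), pderiv i (pderiv i F₂) = 0)
    (hiso : ∀ x : Fin (m + 1) → ℝ, ∑ i, pgrad F₁ x i * pgrad F₂ x i = 0) :
    (∀ p : Fin (m + 1) → ℝ, ∑ j, p j ^ 2 = 1 →
        lap (ext F₁) p = -((d : ℂ) * ((d : ℂ) + (m : ℂ) - 1)) * pev F₁ p ∧
        lap (ext F₂) p = -((d : ℂ) * ((d : ℂ) + (m : ℂ) - 1)) * pev F₂ p) ∧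
    (∀ p : Fin (m + 1) → ℝ, ∑ j, p j ^ 2 = 1 →
        ∑ i, ptang F₁ p i * ptang F₂ p i = -(d : ℂ) ^ 2 * pev F₁ p * pev F₂ p) := by
  refine ⟨fun p hp => ⟨?_, ?_⟩, fun p hp => ?_⟩
  · rw [lap_ext_of_isHomogeneous hhom₁ hharm₁ hp]
    push_cast
    ring
  · rw [lap_ext_of_isHomogeneous hhom₂ hharm₂ hp]
    push_cast
    ring
  · rw [sum_ptang_mul_ptang F₁ F₂ hp, hiso, hhom₁.sum_mul_pgrad, hhom₂.sum_mul_pgrad]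
    ring
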